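/- The number of Dyck paths of semilength n with a double rises, b peaks of height at least 2, and c hills equals the number of Dyck paths of semilength n with b double rises, a peaks of height at least 2, and c hills. -/

import Mathlib

/-- A Dyck word: a list of booleans (`true` = up-step, `false` = down-step)
with equally many ups and downs, every prefix having at least as many ups as downs. -/
def IsDyck (w : List Bool) : Prop :=
  w.count true = w.count false ∧
    ∀ k < w.length, (w.take k).count false ≤ (w.take k).count true

instance : DecidablePred IsDyck := fun w => by unfold IsDyck; infer_instance

/-- Number of double rises (factors `uu`). -/
def numDR (w : List Bool) : ℕ :=
  ((List.range w.length).filter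
    (fun i => w.getD i false = true ∧ w.getD (i+1) false = true)).length

/-- Number of peaks (factors `ud`). -/
def numPeaks (w : List Bool) : ℕ :=
  ((List.range w.length).filter
    (fun i => i+1 < w.length ∧ w.getD i false = true ∧ w.getD (i+1) true = false)).length

/-- Number of valleys (factors `du`). -/
def numValleys (w : List Bool) : ℕ :=
  ((List.range w.length).filter
    (fun i => i+1 < w.length ∧ w.getD i true = false ∧ w.getD (i+1) false = true)).length

/-- Number of hills: peaks whose up-step starts at height 0. -/
def numHills (w : List Bool) : ℕ :=
  ((List.range w.length).filter
    (fun i => i+1 < w.length ∧ w.getD i false = true ∧ w.getD (i+1) true = false ∧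
      (w.take i).count true = (w.take i).count false)).length

/-- Number of peaks of height at least 2: peaks whose up-step starts at positive height. -/
def numPeaks2 (w : List Bool) : ℕ :=
  ((List.range w.length).filter
    (fun i => i+1 < w.length ∧ w.getD i false = true ∧ w.getD (i+1) true = false ∧
      (w.take i).count false < (w.take i).count true)).length

/-- Tunnels of a Dyck word, as pairs `(i, j)`: position `i` holds an up-step, position `j`
a down-step, and the factor strictly between them is a Dyck word (so `w = A u B d C` with
`|A| = i`, `|C| = w.length - j - 1`). -/
def tunnels (w : List Bool) : Finset (ℕ × ℕ) :=
  ((Finset.range w.length) ×ˢ (Finset.range w.length)).filter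
    (fun p => p.1 < p.2 ∧ w.getD p.1 false = true ∧ w.getD p.2 true = false ∧
      IsDyck ((w.drop (p.1+1)).take (p.2 - p.1 - 1)))

/-- Number of tunnels whose midpoint lies on the vertical line `x = n - r`
(for a path of length `2n`); the midpoint of tunnel `(i,j)` has x-coordinate `(i+j+1)/2`. -/
def ctr (r : ℤ) (w : List Bool) : ℕ :=
  ((tunnels w).filter (fun p => (p.1 : ℤ) + p.2 + 1 = (w.length : ℤ) - 2*r)).card

/-- Number of tunnels whose midpoint lies strictly to the left of the line `x = n - r`. -/
def ltr (r : ℤ) (w : List Bool) : ℕ :=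
  ((tunnels w).filter (fun p => (p.1 : ℤ) + p.2 + 1 < (w.length : ℤ) - 2*r)).card

/-- Number of centered tunnels. -/
def ctCount (w : List Bool) : ℕ := ctr 0 w

/-- Number of left tunnels. -/
def ltCount (w : List Bool) : ℕ := ltr 0 w

/-- `π` avoids the pattern 321. -/
def Avoids321 {n : ℕ} (π : Equiv.Perm (Fin n)) : Prop :=
  ¬ ∃ i j k : Fin n, i < j ∧ j < k ∧ π k < π j ∧ π j < π i

/-- `π` avoids the pattern 132. -/
def Avoids132 {n : ℕ} (π : Equiv.Perm (Fin n)) : Prop :=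
  ¬ ∃ i j k : Fin n, i < j ∧ j < k ∧ π i < π k ∧ π k < π j

/-- Number of fixed points. -/
noncomputable def fpCount {n : ℕ} (π : Equiv.Perm (Fin n)) : ℕ := Nat.card {i : Fin n // π i = i}

/-- Number of excedances. -/
noncomputable def excCount {n : ℕ} (π : Equiv.Perm (Fin n)) : ℕ := Nat.card {i : Fin n // i < π i}

/-- Number of weak excedances. -/
noncomputable def wexcCount {n : ℕ} (π : Equiv.Perm (Fin n)) : ℕ := Nat.card {i : Fin n // i ≤ π i}

/-!
Encode a Dyck path `u A d B` as the binary tree with left subtree `A` and right subtree `B`.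
Double rises become left edges (nodes with a nonempty left subtree) and peaks become left
leaves (nodes with an empty left subtree); hills are the left leaves on the right spine (the
root and its iterated right children), and peaks of height at least 2 are the left leaves off it.
Mirroring a nonempty tree exchanges left and right edges, which together number one less than
the nodes, so it turns left leaves into left edges plus one. Hence mirroring every left subtree
hanging off the right spine is an involution that keeps the hills and exchanges double rises
with high peaks.
-/

namespace BinaryTree

variable {α : Type*}

def mirror : BinaryTree α → BinaryTree α
  | nil => nil
  | node a l r => node a r.mirror l.mirror

@[simp] lemma mirror_nil : (nil : BinaryTree α).mirror = nil := rfl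

@[simp] lemma mirror_node (a : α) (l r : BinaryTree α) :
    (node a l r).mirror = node a r.mirror l.mirror := rfl

@[simp] lemma mirror_mirror (t : BinaryTree α) : t.mirror.mirror = t := by
  induction t <;> simp [*]

@[simp] lemma mirror_eq_nil_iff {t : BinaryTree α} : t.mirror = nil ↔ t = nil := by
  cases t <;> simp

def mirrorOffSpine : BinaryTree α → BinaryTree α
  | nil => nil
  | node a l r => node a l.mirror r.mirrorOffSpine

lemma mirrorOffSpine_involutive : Function.Involutive (mirrorOffSpine : BinaryTree α → _) := by
  intro t
  induction t with
  | nil => rfl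
  | node a l r _ ihr => simp [mirrorOffSpine, ihr]

@[simp] lemma numNodes_mirror (t : BinaryTree α) : t.mirror.numNodes = t.numNodes := by
  induction t <;> simp [*]; omega

@[simp] lemma numNodes_mirrorOffSpine (t : BinaryTree α) :
    t.mirrorOffSpine.numNodes = t.numNodes := by
  induction t <;> simp [mirrorOffSpine, *]

lemma numNodes_pos {t : BinaryTree α} (ht : t ≠ nil) : 0 < t.numNodes := by
  cases t <;> simp_all

variable [DecidableEq α]

def numLeftLeaves : BinaryTree α → ℕ
  | nil => 0
  | node _ l r => (if l = nil then 1 else 0) + l.numLeftLeaves + r.numLeftLeaves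

def numLeftEdges : BinaryTree α → ℕ
  | nil => 0
  | node _ l r => (if l = nil then 0 else 1) + l.numLeftEdges + r.numLeftEdges

lemma numLeftLeaves_add_numLeftEdges (t : BinaryTree α) :
    t.numLeftLeaves + t.numLeftEdges = t.numNodes := by
  induction t with
  | nil => rfl
  | node a l r ihl ihr => simp only [numLeftLeaves, numLeftEdges, numNodes]; split_ifs <;> omega

lemma numLeftEdges_add_numLeftEdges_mirror (t : BinaryTree α) :
    t.numLeftEdges + t.mirror.numLeftEdges = t.numNodes - 1 := by
  induction t with
  | nil => rfl
  | node a l r ihl ihr =>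
    have hl := numNodes_pos (t := l)
    have hr := numNodes_pos (t := r)
    simp only [numLeftEdges, mirror_node, mirror_eq_nil_iff, numNodes]
    split_ifs <;> simp_all <;> omega

lemma numLeftLeaves_eq_numLeftEdges_mirror_add_one {t : BinaryTree α} (ht : t ≠ nil) :
    t.numLeftLeaves = t.mirror.numLeftEdges + 1 := by
  have := numNodes_pos ht
  have := numLeftLeaves_add_numLeftEdges t
  have := numLeftEdges_add_numLeftEdges_mirror t
  omega

def numSpineLeftLeaves : BinaryTree α → ℕ
  | nil => 0
  | node _ l r => (if l = nil then 1 else 0) + r.numSpineLeftLeaves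

def numOffSpineLeftLeaves : BinaryTree α → ℕ
  | nil => 0
  | node _ l r => l.numLeftLeaves + r.numOffSpineLeftLeaves

@[simp] lemma numSpineLeftLeaves_mirrorOffSpine (t : BinaryTree α) :
    t.mirrorOffSpine.numSpineLeftLeaves = t.numSpineLeftLeaves := by
  induction t <;> simp [mirrorOffSpine, numSpineLeftLeaves, *]

@[simp] lemma numLeftEdges_mirrorOffSpine (t : BinaryTree α) :
    t.mirrorOffSpine.numLeftEdges = t.numOffSpineLeftLeaves := by
  induction t with
  | nil => rfl
  | node a l r _ ihr =>
    simp only [mirrorOffSpine, numLeftEdges, numOffSpineLeftLeaves, mirror_eq_nil_iff, ihr]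
    split_ifs with hl
    · simp [hl, numLeftLeaves, numLeftEdges]
    · rw [numLeftLeaves_eq_numLeftEdges_mirror_add_one hl]
      omega

@[simp] lemma numOffSpineLeftLeaves_mirrorOffSpine (t : BinaryTree α) :
    t.mirrorOffSpine.numOffSpineLeftLeaves = t.numLeftEdges := by
  rw [← numLeftEdges_mirrorOffSpine, mirrorOffSpine_involutive]

lemma card_numLeftEdges_numOffSpineLeftLeaves_comm (n a b c : ℕ) :
    Nat.card {t : BinaryTree α // t.numNodes = n ∧ t.numLeftEdges = a ∧
      t.numOffSpineLeftLeaves = b ∧ t.numSpineLeftLeaves = c} =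
    Nat.card {t : BinaryTree α // t.numNodes = n ∧ t.numLeftEdges = b ∧
      t.numOffSpineLeftLeaves = a ∧ t.numSpineLeftLeaves = c} :=
  Nat.card_congr <| (mirrorOffSpine_involutive.toPerm _).subtypeEquiv fun t => by
    simp only [Function.Involutive.coe_toPerm, numNodes_mirrorOffSpine,
      numLeftEdges_mirrorOffSpine, numOffSpineLeftLeaves_mirrorOffSpine,
      numSpineLeftLeaves_mirrorOffSpine]
    tauto

end BinaryTree

def DyckStep.equivBool : DyckStep ≃ Bool where
  toFun s := s = DyckStep.U
  invFun b := if b then .U else .D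
  left_inv s := by cases s <;> rfl
  right_inv b := by cases b <;> rfl

@[simp] lemma DyckStep.equivBool_U : DyckStep.equivBool .U = true := rfl

@[simp] lemma DyckStep.equivBool_D : DyckStep.equivBool .D = false := rfl

lemma isDyck_map_equivBool (l : List DyckStep) :
    IsDyck (l.map DyckStep.equivBool) ↔ l.count .U = l.count .D ∧
      ∀ i, (l.take i).count .D ≤ (l.take i).count .U := by
  have hcount (m : List DyckStep) (s : DyckStep) :
      (m.map DyckStep.equivBool).count (DyckStep.equivBool s) = m.count s :=
    List.count_map_of_injective _ _ DyckStep.equivBool.injective _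
  simp only [IsDyck, List.length_map, ← List.map_take, ← DyckStep.equivBool_U,
    ← DyckStep.equivBool_D, hcount]
  refine and_congr_right fun hUD => ⟨fun h i => ?_, fun h i _ => h i⟩
  rcases lt_or_ge i l.length with hi | hi
  · exact h i hi
  · rw [List.take_of_length_le hi, hUD]

namespace BinaryTree

def dyckBools : BinaryTree Unit → List Bool
  | nil => []
  | node _ l r => true :: (l.dyckBools ++ false :: r.dyckBools)

lemma dyckBools_eq_map (t : BinaryTree Unit) :
    t.dyckBools = (DyckWord.ofTree t).toList.map DyckStep.equivBool := by
  induction t with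
  | nil => rfl
  | node a l r ihl ihr =>
    change _ = List.map _
      ([.U] ++ (DyckWord.ofTree l).toList ++ [.D] ++ (DyckWord.ofTree r).toList)
    simp [dyckBools, ihl, ihr]

lemma length_dyckBools (t : BinaryTree Unit) : t.dyckBools.length = 2 * t.numNodes := by
  induction t <;> simp [dyckBools, *]; ring

lemma dyckBools_injective : Function.Injective dyckBools := by
  intro s t h
  rw [dyckBools_eq_map, dyckBools_eq_map] at h
  exact DyckWord.equivTree.symm.injective
    (DyckWord.ext (List.map_injective_iff.mpr DyckStep.equivBool.injective h))

lemma isDyck_iff_exists_dyckBools {w : List Bool} :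
    IsDyck w ↔ ∃ t : BinaryTree Unit, t.dyckBools = w := by
  constructor
  · intro hw
    obtain ⟨hUD, hDU⟩ := (isDyck_map_equivBool (w.map DyckStep.equivBool.symm)).mp (by
      simpa [List.map_map] using hw)
    refine ⟨(DyckWord.mk _ hUD hDU).toTree, ?_⟩
    simp [dyckBools_eq_map, DyckWord.ofTree_toTree, List.map_map]
  · rintro ⟨t, rfl⟩
    rw [dyckBools_eq_map, isDyck_map_equivBool]
    exact ⟨(DyckWord.ofTree t).count_U_eq_count_D, (DyckWord.ofTree t).count_D_le_count_U⟩

lemma card_isDyck_eq_card_numNodes (n : ℕ) (S : List Bool → Prop) :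
    Nat.card {w : List Bool // w.length = 2 * n ∧ IsDyck w ∧ S w} =
      Nat.card {t : BinaryTree Unit // t.numNodes = n ∧ S t.dyckBools} := by
  symm
  refine Nat.card_congr (Equiv.ofBijective
    (fun t => ⟨t.1.dyckBools, by rw [length_dyckBools, t.2.1],
      isDyck_iff_exists_dyckBools.mpr ⟨_, rfl⟩, t.2.2⟩)
    ⟨fun s t h => Subtype.ext (dyckBools_injective (congrArg Subtype.val h)), fun w => ?_⟩)
  obtain ⟨hlen, hw, hS⟩ := w.2
  obtain ⟨t, ht⟩ := isDyck_iff_exists_dyckBools.mp hw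
  refine ⟨⟨t, ?_, ht ▸ hS⟩, Subtype.ext ht⟩
  have := length_dyckBools t
  rw [ht, hlen] at this
  omega

end BinaryTree

lemma List.length_filter_range_succ (n : ℕ) (p : ℕ → Bool) :
    ((List.range (n + 1)).filter p).length =
      (if p 0 then 1 else 0) + ((List.range n).filter (fun i => p (i + 1))).length := by
  rw [List.range_succ_eq_map, List.filter_cons]
  split_ifs <;> simp [List.filter_map, Function.comp_def, Nat.add_comm]

lemma numDR_cons (a : Bool) (w : List Bool) :
    numDR (a :: w) = (if a = true ∧ w.head? = some true then 1 else 0) + numDR w := by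
  unfold numDR
  rw [List.length_cons, List.length_filter_range_succ]
  congr 1
  rcases w with _ | ⟨b, w⟩ <;> cases a <;> simp

/-- Peaks of `w` whose up-step starts at a height satisfying `P`, when `w` starts at height `h`. -/
def numPeaksFrom (P : ℤ → Prop) [DecidablePred P] (h : ℤ) (w : List Bool) : ℕ :=
  ((List.range w.length).filter (fun i => i + 1 < w.length ∧ w.getD i false = true ∧
    w.getD (i + 1) true = false ∧
      P (h + (w.take i).count true - (w.take i).count false))).length

lemma numPeaksFrom_cons (P : ℤ → Prop) [DecidablePred P] (h : ℤ) (a : Bool) (w : List Bool) :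
    numPeaksFrom P h (a :: w) = (if a = true ∧ w.head? = some false ∧ P h then 1 else 0) +
      numPeaksFrom P (h + if a then 1 else -1) w := by
  unfold numPeaksFrom
  rw [List.length_cons, List.length_filter_range_succ]
  congr 1
  · rcases w with _ | ⟨b, w⟩ <;> cases a <;> simp
  · congr 1
    refine List.filter_congr fun i _ => ?_
    have hheight : h + ((a :: w).take (i + 1)).count true - ((a :: w).take (i + 1)).count false =
        (h + if a then 1 else -1) + (w.take i).count true - (w.take i).count false := by
      cases a <;> simp <;> ring
    simp only [Nat.add_lt_add_iff_right, List.getD_cons_succ, hheight]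

lemma numPeaksFrom_true_cons (P : ℤ → Prop) [DecidablePred P] (h : ℤ) (w : List Bool) :
    numPeaksFrom P h (true :: w) =
      (if w.head? = some false ∧ P h then 1 else 0) + numPeaksFrom P (h + 1) w := by
  simp [numPeaksFrom_cons]

lemma numPeaksFrom_false_cons (P : ℤ → Prop) [DecidablePred P] (h : ℤ) (w : List Bool) :
    numPeaksFrom P h (false :: w) = numPeaksFrom P (h - 1) w := by
  simp [numPeaksFrom_cons, sub_eq_add_neg]

lemma numHills_eq_numPeaksFrom (w : List Bool) : numHills w = numPeaksFrom (· = 0) 0 w := by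
  unfold numHills numPeaksFrom
  congr 1
  refine List.filter_congr fun i _ => ?_
  simp only [zero_add, sub_eq_zero, Nat.cast_inj]

lemma numPeaks2_eq_numPeaksFrom (w : List Bool) : numPeaks2 w = numPeaksFrom (0 < ·) 0 w := by
  unfold numPeaks2 numPeaksFrom
  congr 1
  refine List.filter_congr fun i _ => ?_
  simp only [zero_add, sub_pos, Nat.cast_lt]

namespace BinaryTree

lemma dyckBools_node_append (l r : BinaryTree Unit) (s : List Bool) :
    (node () l r).dyckBools ++ s = true :: (l.dyckBools ++ false :: (r.dyckBools ++ s)) := by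
  simp [dyckBools]

lemma head?_dyckBools_append (t : BinaryTree Unit) (b : Bool) (s : List Bool) :
    (t.dyckBools ++ b :: s).head? = some (if t = nil then b else true) := by
  cases t <;> simp [dyckBools]

lemma numDR_dyckBools_append (t : BinaryTree Unit) (s : List Bool) :
    numDR (t.dyckBools ++ s) = t.numLeftEdges + numDR s := by
  induction t generalizing s with
  | nil => simp [dyckBools, numLeftEdges]
  | node _ l r ihl ihr =>
    rw [dyckBools_node_append, numDR_cons, ihl, numDR_cons, ihr, head?_dyckBools_append]
    simp only [numLeftEdges]
    split_ifs <;> simp_all [add_assoc]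

lemma numDR_dyckBools (t : BinaryTree Unit) : numDR t.dyckBools = t.numLeftEdges := by
  simpa [numDR] using numDR_dyckBools_append t []

/-- The peaks of a Dyck path started at height `h` all start at height at least `h`. -/
lemma numPeaksFrom_dyckBools_append (P : ℤ → Prop) [DecidablePred P] (t : BinaryTree Unit)
    (s : List Bool) (h : ℤ) (hP : ∀ k ≥ h, P k ↔ P h) :
    numPeaksFrom P h (t.dyckBools ++ s) =
      (if P h then t.numLeftLeaves else 0) + numPeaksFrom P h s := by
  induction t generalizing s h with
  | nil => simp [dyckBools, numLeftLeaves]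
  | node _ l r ihl ihr =>
    have hP1 : P (h + 1) ↔ P h := hP _ (by omega)
    rw [dyckBools_node_append, numPeaksFrom_true_cons,
      ihl _ _ fun k hk => (hP k (by omega)).trans hP1.symm, numPeaksFrom_false_cons,
      add_sub_cancel_right, ihr _ _ hP, head?_dyckBools_append]
    simp only [numLeftLeaves, hP1]
    split_ifs <;> simp_all [add_assoc]

lemma numPeaksFrom_dyckBools_node (P : ℤ → Prop) [DecidablePred P] (l r : BinaryTree Unit)
    (hP : ∀ k ≥ 1, P k ↔ P 1) :
    numPeaksFrom P 0 (node () l r).dyckBools = (if l = nil ∧ P 0 then 1 else 0) +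
      (if P 1 then l.numLeftLeaves else 0) + numPeaksFrom P 0 r.dyckBools := by
  rw [← List.append_nil (node () l r).dyckBools, dyckBools_node_append, numPeaksFrom_true_cons,
    zero_add, numPeaksFrom_dyckBools_append P l _ 1 hP, numPeaksFrom_false_cons, sub_self,
    List.append_nil, head?_dyckBools_append]
  split_ifs <;> simp_all [add_assoc]

lemma numHills_dyckBools (t : BinaryTree Unit) : numHills t.dyckBools = t.numSpineLeftLeaves := by
  rw [numHills_eq_numPeaksFrom]
  induction t with
  | nil => rfl
  | node _ l r _ ihr =>
    rw [numPeaksFrom_dyckBools_node _ _ _ fun k hk => by omega, ihr]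
    simp [numSpineLeftLeaves]

lemma numPeaks2_dyckBools (t : BinaryTree Unit) :
    numPeaks2 t.dyckBools = t.numOffSpineLeftLeaves := by
  rw [numPeaks2_eq_numPeaksFrom]
  induction t with
  | nil => rfl
  | node _ l r _ ihr =>
    rw [numPeaksFrom_dyckBools_node _ _ _ fun k hk => by omega, ihr]
    simp [numOffSpineLeftLeaves]

end BinaryTree

/-- The number of Dyck paths of semilength `n` with `a` double rises, `b` peaks of height
at least 2 and `c` hills equals the number with `b` double rises, `a` peaks of height at
least 2 and `c` hills. -/
theorem stmt7 (n a b c : ℕ) :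
    Nat.card {w : List Bool // w.length = 2 * n ∧ IsDyck w ∧
        numDR w = a ∧ numPeaks2 w = b ∧ numHills w = c} =
    Nat.card {w : List Bool // w.length = 2 * n ∧ IsDyck w ∧
        numDR w = b ∧ numPeaks2 w = a ∧ numHills w = c} := by
  have card_eq (a b : ℕ) := BinaryTree.card_isDyck_eq_card_numNodes n fun w =>
    numDR w = a ∧ numPeaks2 w = b ∧ numHills w = c
  simp only [BinaryTree.numDR_dyckBools, BinaryTree.numPeaks2_dyckBools,
    BinaryTree.numHills_dyckBools] at card_eq
  rw [card_eq, card_eq, BinaryTree.card_numLeftEdges_numOffSpineLeftLeaves_comm]
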